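/- For every integer k ≥ 1 and every n ≥ 0, the function ε ↦ ρ_n^{(k)}(ε) is strictly decreasing on (0, ∞), and the function ε ↦ b_n^{(k)}(ε) is strictly increasing on (0, ∞). -/
import Mathlib


/-- The map `T` acting on sequences: `T(u)₀ = ε/(1+u₁)`,
`T(u)ₙ = ε(n+1)/(1 + u_{n-1} + u_{n+1})` for `n ≥ 1`. -/
noncomputable def Tmap (ε : ℝ) (u : ℕ → ℝ) : ℕ → ℝ
  | 0 => ε / (1 + u 1)
  | (n+1) => ε * ((n : ℝ) + 2) / (1 + u n + u (n+2))

/-- Shifted bound sequences: `bnd ε k = b^{(k-1)}`, i.e. `bnd ε 0 = b^{(-1)} = 0`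
and `bnd ε (k+1) = T (bnd ε k)`, so that `b^{(k)} = bnd ε (k+1)` for `k ≥ -1`. -/
noncomputable def bnd (ε : ℝ) : ℕ → ℕ → ℝ
  | 0 => fun _ => 0
  | (k+1) => Tmap ε (bnd ε k)

/-- Shifted rescaled bounds: `rho ε k n = ρ_n^{(k-1)} = b_n^{(k-1)}/(ε(n+1))`. -/
noncomputable def rho (ε : ℝ) (k n : ℕ) : ℝ := bnd ε k n / (ε * ((n : ℝ) + 1))

/-- The differences `Δd ε k n = Δ_n^{(k)} = (-1)^k (ρ_n^{(k)} - ρ_n^{(k-1)})` for `k ≥ 0`. -/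
noncomputable def Δd (ε : ℝ) (k n : ℕ) : ℝ := (-1 : ℝ)^k * (rho ε (k+1) n - rho ε k n)

lemma bnd_nonneg {ε : ℝ} (hε : 0 < ε) : ∀ k n, 0 ≤ bnd ε k n := by
  intro k
  induction k with
  | zero => intro n; simp [bnd]
  | succ k ih =>
    intro n
    cases n with
    | zero =>
      simp only [bnd, Tmap]
      exact div_nonneg hε.le (by linarith [ih 1])
    | succ m =>
      simp only [bnd, Tmap]
      apply div_nonneg (by positivity)
      linarith [ih m, ih (m+2)]

lemma frac {ε1 ε2 c S1 S2 : ℝ} (h1 : 0 < ε1) (h12 : ε1 < ε2) (hc : 0 < c)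
    (hS1 : 0 ≤ S1) (hS2 : 0 ≤ S2) (hmono : S1 ≤ S2) (hrho : ε1 * S2 ≤ ε2 * S1) :
    ε1 * c / (1 + S1) < ε2 * c / (1 + S2) ∧
    ε1 * (ε2 * c / (1 + S2)) ≤ ε2 * (ε1 * c / (1 + S1)) := by
  have hd1 : (0:ℝ) < 1 + S1 := by linarith
  have hd2 : (0:ℝ) < 1 + S2 := by linarith
  constructor
  · rw [div_lt_div_iff₀ hd1 hd2]
    nlinarith [mul_le_mul_of_nonneg_left hrho hc.le]
  · rw [mul_div_assoc', mul_div_assoc', div_le_div_iff₀ hd2 hd1]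
    nlinarith [mul_le_mul_of_nonneg_left hmono (by have h2 : 0 < ε2 := h1.trans h12; positivity : (0:ℝ) ≤ ε1 * ε2 * c)]

lemma key {ε1 ε2 : ℝ} (h1 : 0 < ε1) (h12 : ε1 < ε2) : ∀ k,
    (∀ n, ε1 * bnd ε2 k n ≤ ε2 * bnd ε1 k n) ∧
    (1 ≤ k → ∀ n, bnd ε1 k n < bnd ε2 k n) := by
  have h2 : 0 < ε2 := h1.trans h12
  intro k
  induction k with
  | zero =>
    refine ⟨fun n => by simp [bnd], fun h => by omega⟩
  | succ k ih =>
    obtain ⟨ih1, ih2⟩ := ih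
    have hle : ∀ n, bnd ε1 k n ≤ bnd ε2 k n := by
      intro n
      rcases Nat.eq_zero_or_pos k with hk | hk
      · subst hk; simp [bnd]
      · exact (ih2 hk n).le
    have main : ∀ n, ε1 * bnd ε2 (k+1) n ≤ ε2 * bnd ε1 (k+1) n ∧
        bnd ε1 (k+1) n < bnd ε2 (k+1) n := by
      intro n
      cases n with
      | zero =>
        simp only [bnd, Tmap]
        have h := frac (c := 1) h1 h12 one_pos (bnd_nonneg h1 k 1) (bnd_nonneg h2 k 1)
          (hle 1) (by linarith [ih1 1])
        rw [mul_one, mul_one] at h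
        exact ⟨h.2, h.1⟩
      | succ m =>
        simp only [bnd, Tmap]
        have hS1 : 0 ≤ bnd ε1 k m + bnd ε1 k (m+2) := by
          linarith [bnd_nonneg h1 k m, bnd_nonneg h1 k (m+2)]
        have hS2 : 0 ≤ bnd ε2 k m + bnd ε2 k (m+2) := by
          linarith [bnd_nonneg h2 k m, bnd_nonneg h2 k (m+2)]
        have hmono : bnd ε1 k m + bnd ε1 k (m+2) ≤ bnd ε2 k m + bnd ε2 k (m+2) := by
          linarith [hle m, hle (m+2)]
        have hrho : ε1 * (bnd ε2 k m + bnd ε2 k (m+2)) ≤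
            ε2 * (bnd ε1 k m + bnd ε1 k (m+2)) := by
          have := ih1 m; have := ih1 (m+2); ring_nf; ring_nf at this ⊢; nlinarith [ih1 m, ih1 (m+2)]
        have hc : (0:ℝ) < (m:ℝ) + 2 := by positivity
        have h := frac h1 h12 hc hS1 hS2 hmono hrho
        rw [show (1:ℝ) + (bnd ε1 k m + bnd ε1 k (m+2)) = 1 + bnd ε1 k m + bnd ε1 k (m+2) by ring,
            show (1:ℝ) + (bnd ε2 k m + bnd ε2 k (m+2)) = 1 + bnd ε2 k m + bnd ε2 k (m+2) by ring] at h
        exact ⟨h.2, h.1⟩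
    exact ⟨fun n => (main n).1, fun _ n => (main n).2⟩

lemma rho_eq_zero {ε : ℝ} (hε : 0 < ε) (k : ℕ) :
    rho ε (k+1) 0 = 1 / (1 + bnd ε k 1) := by
  have hb : (0:ℝ) < 1 + bnd ε k 1 := by linarith [bnd_nonneg hε k 1]
  simp only [rho, bnd, Tmap, Nat.cast_zero]
  rw [div_div, div_eq_div_iff (by positivity) (by positivity)]
  ring

lemma rho_eq_succ {ε : ℝ} (hε : 0 < ε) (k m : ℕ) :
    rho ε (k+1) (m+1) = 1 / (1 + bnd ε k m + bnd ε k (m+2)) := by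
  have hb : (0:ℝ) < 1 + bnd ε k m + bnd ε k (m+2) := by
    linarith [bnd_nonneg hε k m, bnd_nonneg hε k (m+2)]
  simp only [rho, bnd, Tmap]
  rw [div_div, div_eq_div_iff (by positivity) hb.ne']
  push_cast
  ring

/-- For `k ≥ 1` and each `n`, `ε ↦ ρ_n^{(k)}(ε)` is strictly decreasing on `(0,∞)`
and `ε ↦ b_n^{(k)}(ε)` is strictly increasing on `(0,∞)`. -/
theorem statement7 (k n : ℕ) (hk : 1 ≤ k) :
    StrictAntiOn (fun ε : ℝ => rho ε (k+1) n) (Set.Ioi 0) ∧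
    StrictMonoOn (fun ε : ℝ => bnd ε (k+1) n) (Set.Ioi 0) := by
  
  constructor
  · intro ε1 hε1 ε2 hε2 h12
    simp only [Set.mem_Ioi] at hε1 hε2
    have key2 := (key hε1 h12 k).2 hk
    simp only
    cases n with
    | zero =>
      rw [rho_eq_zero hε1 k, rho_eq_zero hε2 k]
      have hb1 : (0:ℝ) < 1 + bnd ε1 k 1 := by linarith [bnd_nonneg hε1 k 1]
      exact one_div_lt_one_div_of_lt hb1 (by linarith [key2 1])
    | succ m =>
      rw [rho_eq_succ hε1 k m, rho_eq_succ hε2 k m]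
      have hb1 : (0:ℝ) < 1 + bnd ε1 k m + bnd ε1 k (m+2) := by
        linarith [bnd_nonneg hε1 k m, bnd_nonneg hε1 k (m+2)]
      exact one_div_lt_one_div_of_lt hb1 (by linarith [key2 m, key2 (m+2)])
  · intro ε1 hε1 ε2 hε2 h12
    simp only [Set.mem_Ioi] at hε1 hε2
    exact (key hε1 h12 (k+1)).2 (by omega) n
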